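/- arXiv:2305.18664 — 3 statements merged into one kernel-verified Lean document; each statement's English description precedes it below -/
import Mathlib

section
/- Let (Ω, F, P) be a probability space, t ≥ 0, and let B = {B_s} be an ℝ^d-valued continuous process with B₀ = 0 such that B^t_s := B_s − B_t (s ≥ t) is a Brownian motion under P. Let Φ : Ω → Ω₀ be a map into Wiener space satisfying W^t_s(Φ(ω)) = B^t_s(ω) for all s ≥ t, ω ∈ Ω, where W is the canonical process and W^t_s := W_s − W_t. Then for every [t,∞]-valued stopping time τ on Ω with respect to the augmented filtration F^{B^t,P}, there exists a [t,∞]-valued F^{W^t,P₀}-stopping time τ̂ on Ω₀ such that τ = τ̂∘Φ, P-a.s. -/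
open MeasureTheory ProbabilityTheory Filter

noncomputable section

/-- The canonical path space of continuous `ℝ^d`-valued paths. -/
abbrev PathSp (d : ℕ) : Type := C(ℝ, Fin d → ℝ)

instance (d : ℕ) : MeasurableSpace (PathSp d) := borel _
instance (d : ℕ) : BorelSpace (PathSp d) := ⟨rfl⟩

/-- The increments of `B` after time `t` are those of a Brownian motion under `P`:
independent increments over `[t,∞)` with Gaussian law of covariance `(r−s)·I_d`.
(This says that `B^t_s := B_s − B_t`, `s ≥ t`, is a Brownian motion.) -/
structure IsBMAfter {Ω : Type*} [MeasurableSpace Ω] (P : Measure Ω) {d : ℕ}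
    (B : ℝ → Ω → Fin d → ℝ) (t : ℝ) : Prop where
  indep : ∀ (n : ℕ) (u : Fin (n + 1) → ℝ), Monotone u → (∀ i, t ≤ u i) →
    iIndepFun
      (fun (i : Fin n) ω => B (u i.succ) ω - B (u i.castSucc) ω) P
  gauss : ∀ s r : ℝ, t ≤ s → s ≤ r →
    P.map (fun ω => B r ω - B s ω) =
      Measure.pi fun _ : Fin d => gaussianReal 0 (r - s).toNNReal

/-- The raw filtration `F^{B^t}_s` generated by the increments of `B` after `t`, up to `s`. -/
def incSig {Ω : Type*} {d : ℕ} (B : ℝ → Ω → Fin d → ℝ) (t s : ℝ) : MeasurableSpace Ω :=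
  ⨆ r ∈ Set.Icc t s, MeasurableSpace.comap (fun ω => B r ω - B t ω) inferInstance

/-- The sigma-field `F^{B^t}_∞`. -/
def incSigInf {Ω : Type*} {d : ℕ} (B : ℝ → Ω → Fin d → ℝ) (t : ℝ) : MeasurableSpace Ω :=
  ⨆ r ∈ Set.Ici t, MeasurableSpace.comap (fun ω => B r ω - B t ω) inferInstance

/-- The `P`-null sets relative to `F^{B^t}_∞`, as a sigma-field. -/
def incNull {Ω : Type*} [MeasurableSpace Ω] (P : Measure Ω) {d : ℕ}
    (B : ℝ → Ω → Fin d → ℝ) (t : ℝ) : MeasurableSpace Ω :=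
  MeasurableSpace.generateFrom
    {N | ∃ A, MeasurableSet[incSigInf B t] A ∧ P A = 0 ∧ N ⊆ A}

/-- The `P`-augmented filtration `F^{B^t,P}_s`. -/
def incAug {Ω : Type*} [MeasurableSpace Ω] (P : Measure Ω) {d : ℕ}
    (B : ℝ → Ω → Fin d → ℝ) (t s : ℝ) : MeasurableSpace Ω :=
  incSig B t s ⊔ incNull P B t

/-- A `[t,∞]`-valued stopping time of the `P`-augmented filtration `F^{B^t,P}`. -/
def IsIncStoppingTime {Ω : Type*} [MeasurableSpace Ω] (P : Measure Ω) {d : ℕ}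
    (B : ℝ → Ω → Fin d → ℝ) (t : ℝ) (τ : Ω → ENNReal) : Prop :=
  (∀ ω, ENNReal.ofReal t ≤ τ ω) ∧
  ∀ s : ℝ, t ≤ s → MeasurableSet[incAug P B t s] {ω | τ ω ≤ ENNReal.ofReal s}

/-!
Since `Φ` intertwines the increments of `W` and `B` after `t`, it pulls the raw filtration
`F^{W^t}_s` back to `F^{B^t}_s`; hence each event `{τ ≤ s}` of the augmented filtration agrees
`P`-a.s. with `Φ⁻¹(Â_s)` for some `Â_s ∈ F^{W^t}_s`, and the first rational time `q ≥ t` with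
`x ∈ Â_q` defines `τ̂` with `τ = τ̂ ∘ Φ` `P`-a.s.

The increments after `t` have the same finite-dimensional laws under `P` and `P₀` (partial sums
of independent Gaussians), so by uniqueness of projective limits `P₀ = P ∘ Φ⁻¹` on `F^{W^t}_∞`.
Thus `{τ̂ ≤ s}` differs from `Â_s` by a `P₀`-null set of `F^{W^t}_∞`, and `τ̂` is a stopping
time of `F^{W^t,P₀}`.
-/

open scoped symmDiff ENNReal

section NullSigma

variable {α : Type*} {m0 : MeasurableSpace α}

-- `incNull P B t` is `nullSigma P (incSigInf B t)` by definition.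
def nullSigma (μ : Measure α) (m : MeasurableSpace α) : MeasurableSpace α :=
  MeasurableSpace.generateFrom {N | ∃ A, MeasurableSet[m] A ∧ μ A = 0 ∧ N ⊆ A}

variable {μ : Measure α} {m m' : MeasurableSpace α} {M A : Set α}

lemma exists_ae_eq_of_measurableSet_sup_nullSigma (hM : MeasurableSet[m ⊔ nullSigma μ m'] M) :
    ∃ A, MeasurableSet[m] A ∧ M =ᵐ[μ] A := by
  rw [nullSigma, ← @MeasurableSpace.generateFrom_measurableSet _ m,
    MeasurableSpace.generateFrom_sup_generateFrom] at hM
  induction M, hM using MeasurableSpace.generateFrom_induction with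
  | hC M hM =>
    rcases hM with hM | ⟨A, -, hA, hMA⟩
    · exact ⟨M, hM, .rfl⟩
    · exact ⟨∅, @MeasurableSet.empty _ m, ae_eq_empty.2 (measure_mono_null hMA hA)⟩
  | empty => exact ⟨∅, @MeasurableSet.empty _ m, .rfl⟩
  | compl M _ ih =>
    obtain ⟨A, hA, hMA⟩ := ih
    exact ⟨Aᶜ, hA.compl, hMA.compl⟩
  | iUnion f _ ih =>
    choose A hA hfA using ih
    exact ⟨⋃ n, A n, .iUnion hA, .countable_iUnion hfA⟩

lemma measurableSet_sup_nullSigma_of_ae_eq (hA : MeasurableSet[m] A)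
    (hAM : MeasurableSet[m'] (A ∆ M)) (hMA : M =ᵐ[μ] A) :
    MeasurableSet[m ⊔ nullSigma μ m'] M := by
  have hnull : MeasurableSet[nullSigma μ m'] (A ∆ M) :=
    MeasurableSpace.measurableSet_generateFrom
      ⟨_, hAM, measure_symmDiff_eq_zero_iff.2 hMA.symm, subset_rfl⟩
  rw [← symmDiff_symmDiff_cancel_left A M]
  exact (le_sup_left (b := nullSigma μ m') _ hA).symmDiff (le_sup_right (a := m) _ hnull)

end NullSigma

section RatHittingTime

variable {α : Type*} {t : ℝ} {A : ℝ → Set α}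

def ratHittingTime (t : ℝ) (A : ℝ → Set α) (x : α) : ℝ≥0∞ :=
  ⨅ (q : ℚ) (_ : t ≤ q) (_ : x ∈ A q), ENNReal.ofReal q

lemma ofReal_le_ratHittingTime (x : α) : ENNReal.ofReal t ≤ ratHittingTime t A x :=
  le_iInf₂ fun _ hq => le_iInf fun _ => ENNReal.ofReal_le_ofReal hq

lemma ratHittingTime_eq {x : α} {a : ℝ≥0∞} (ha : ENNReal.ofReal t ≤ a)
    (hA : ∀ q : ℚ, t ≤ q → (x ∈ A q ↔ a ≤ ENNReal.ofReal q)) : ratHittingTime t A x = a := by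
  refine le_antisymm (le_of_forall_gt_imp_ge_of_dense fun b hab => ?_)
    (le_iInf₂ fun q hq => le_iInf fun hx => (hA q hq).1 hx)
  obtain ⟨q, -, haq, hqb⟩ := ENNReal.lt_iff_exists_rat_btwn.1 hab
  have htq : t ≤ q := le_of_not_gt fun hqt =>
    (ha.trans_lt haq).not_ge (ENNReal.ofReal_le_ofReal hqt.le)
  exact (iInf₂_le q htq).trans ((iInf_le _ ((hA q htq).2 haq.le)).trans hqb.le)

lemma measurable_ratHittingTime {m : MeasurableSpace α}
    (hA : ∀ q : ℚ, t ≤ q → MeasurableSet[m] (A q)) : Measurable[m] (ratHittingTime t A) := by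
  classical
  refine Measurable.iInf fun q => ?_
  by_cases hq : t ≤ q
  · simp only [iInf_pos hq, iInf_eq_if]
    exact Measurable.ite (hA q hq) measurable_const measurable_const
  · simp only [hq, iInf_false]
    exact measurable_const

end RatHittingTime

section Increments

variable {Ω Ω' : Type*} {d : ℕ} {t : ℝ} {X : ℝ → Ω → Fin d → ℝ}

def incrementProcess (X : ℝ → Ω → Fin d → ℝ) (t : ℝ) (ω : Ω) (r : Set.Ici t) : Fin d → ℝ :=
  X r ω - X t ω

lemma measurable_incrementProcess [MeasurableSpace Ω] (hX : ∀ r, Measurable (X r)) :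
    Measurable (incrementProcess X t) :=
  measurable_pi_lambda _ fun r => (hX r).sub (hX t)

lemma incSigInf_eq_comap_incrementProcess :
    incSigInf X t = MeasurableSpace.comap (incrementProcess X t) MeasurableSpace.pi := by
  simp only [incSigInf, MeasurableSpace.pi, MeasurableSpace.comap_iSup,
    MeasurableSpace.comap_comp]
  exact iSup_subtype'

lemma incSig_le_incSigInf (s : ℝ) : incSig X t s ≤ incSigInf X t :=
  iSup₂_mono' fun r hr => ⟨r, hr.1, le_rfl⟩

lemma comap_incSig (Y : ℝ → Ω' → Fin d → ℝ) (Φ : Ω' → Ω)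
    (hΦ : ∀ r, t ≤ r → ∀ ω, X r (Φ ω) - X t (Φ ω) = Y r ω - Y t ω) (s : ℝ) :
    MeasurableSpace.comap Φ (incSig X t s) = incSig Y t s := by
  simp only [incSig, MeasurableSpace.comap_iSup, MeasurableSpace.comap_comp]
  refine iSup_congr fun r => iSup_congr fun hr => ?_
  congr 1
  exact funext (hΦ r hr.1)

end Increments

lemma Fin.partialSum_sub {G : Type*} [AddCommGroup G] {k : ℕ} (f : Fin (k + 1) → G) :
    Fin.partialSum (fun i => f i.succ - f i.castSucc) = fun i => f i - f 0 := by
  funext i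
  have := congrFun (Fin.partialSum_left_neg f) i
  simp only [neg_add_eq_sub] at this
  exact eq_sub_of_add_eq' this

lemma Fin.measurable_partialSum {V : Type*} [AddMonoid V] [MeasurableSpace V]
    [MeasurableAdd₂ V] {k : ℕ} : Measurable (Fin.partialSum : (Fin k → V) → Fin (k + 1) → V) :=
  measurable_pi_iff.2 fun i => by
    induction i using Fin.induction with
    | zero => simp
    | succ j ih =>
      simp only [Fin.partialSum_succ]
      exact ih.add (measurable_pi_apply j)

section SortedTimes

variable {t : ℝ}

def sortedTimes (I : Finset (Set.Ici t)) : Fin (I.card + 1) → ℝ :=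
  Fin.cons t fun i => ((I.orderIsoOfFin rfl i : Set.Ici t) : ℝ)

lemma le_sortedTimes (I : Finset (Set.Ici t)) (i : Fin (I.card + 1)) : t ≤ sortedTimes I i := by
  induction i using Fin.cases with
  | zero => exact le_rfl
  | succ i => exact (I.orderIsoOfFin rfl i : Set.Ici t).2

lemma monotone_sortedTimes (I : Finset (Set.Ici t)) : Monotone (sortedTimes I) := by
  intro a b hab
  induction a using Fin.cases with
  | zero => exact le_sortedTimes I b
  | succ a =>
    induction b using Fin.cases with
    | zero => exact absurd hab (Fin.succ_pos a).not_ge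
    | succ b => exact (I.orderIsoOfFin rfl).monotone (Fin.succ_le_succ_iff.1 hab)

@[simp]
lemma sortedTimes_zero (I : Finset (Set.Ici t)) : sortedTimes I 0 = t := rfl

@[simp]
lemma sortedTimes_succ_symm (I : Finset (Set.Ici t)) (r : I) :
    sortedTimes I ((I.orderIsoOfFin rfl).symm r).succ = r := by
  simp only [sortedTimes, Fin.cons_succ, OrderIso.apply_symm_apply]

end SortedTimes

namespace IsBMAfter

variable {Ω Ω' : Type*} [MeasurableSpace Ω] [MeasurableSpace Ω'] {μ : Measure Ω}
  {ν : Measure Ω'} {d : ℕ} {t : ℝ} {X : ℝ → Ω → Fin d → ℝ} {Y : ℝ → Ω' → Fin d → ℝ}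

lemma mono (h : IsBMAfter μ X t) {t' : ℝ} (htt' : t ≤ t') : IsBMAfter μ X t' :=
  ⟨fun n u hu hut => h.indep n u hu fun i => htt'.trans (hut i),
    fun s r hs hsr => h.gauss s r (htt'.trans hs) hsr⟩

lemma measurable_increments (hX : ∀ r, Measurable (X r)) {k : ℕ} (u : Fin (k + 1) → ℝ) :
    Measurable fun ω (i : Fin k) => X (u i.succ) ω - X (u i.castSucc) ω :=
  measurable_pi_lambda _ fun _ => (hX _).sub (hX _)

lemma map_increments (h : IsBMAfter μ X t) (hX : ∀ r, Measurable (X r)) {k : ℕ}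
    {u : Fin (k + 1) → ℝ} (hu : Monotone u) (hut : ∀ i, t ≤ u i) :
    μ.map (fun ω i => X (u i.succ) ω - X (u i.castSucc) ω) =
      Measure.pi fun i : Fin k => Measure.pi fun _ : Fin d =>
        gaussianReal 0 (u i.succ - u i.castSucc).toNNReal := by
  refine (Measure.pi_eq fun S hS => ?_).symm
  rw [Measure.map_apply (measurable_increments hX u) (.univ_pi hS), Set.univ_pi_eq_iInter,
    Set.preimage_iInter]
  refine ((h.indep k u hu hut).meas_iInter fun i => ⟨S i, hS i, rfl⟩).trans
    (Finset.prod_congr rfl fun i _ => ?_)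
  rw [← h.gauss _ _ (hut _) (hu (Fin.castSucc_le_succ i))]
  exact (Measure.map_apply ((hX _).sub (hX _)) (hS i)).symm

lemma map_sub_eq_map_partialSum (h : IsBMAfter μ X t) (hX : ∀ r, Measurable (X r)) {k : ℕ}
    {u : Fin (k + 1) → ℝ} (hu : Monotone u) (hut : ∀ i, t ≤ u i) :
    μ.map (fun ω i => X (u i) ω - X (u 0) ω) =
      (Measure.pi fun i : Fin k => Measure.pi fun _ : Fin d =>
        gaussianReal 0 (u i.succ - u i.castSucc).toNNReal).map Fin.partialSum := by
  rw [← h.map_increments hX hu hut,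
    Measure.map_map Fin.measurable_partialSum (measurable_increments hX u)]
  exact congrArg (μ.map ·) (funext fun ω => (Fin.partialSum_sub fun i => X (u i) ω).symm)

lemma map_restrict_incrementProcess (h : IsBMAfter μ X t) (hX : ∀ r, Measurable (X r))
    (I : Finset (Set.Ici t)) :
    μ.map (fun ω => I.restrict (incrementProcess X t ω)) =
      ((Measure.pi fun i : Fin I.card => Measure.pi fun _ : Fin d =>
        gaussianReal 0 (sortedTimes I i.succ - sortedTimes I i.castSucc).toNNReal).map
          Fin.partialSum).map fun v r => v ((I.orderIsoOfFin rfl).symm r).succ := by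
  have hv : Measurable fun (v : Fin (I.card + 1) → Fin d → ℝ) (r : I) =>
      v ((I.orderIsoOfFin rfl).symm r).succ :=
    measurable_pi_lambda _ fun _ => measurable_pi_apply _
  have hsub : Measurable fun ω i => X (sortedTimes I i) ω - X (sortedTimes I 0) ω :=
    measurable_pi_lambda _ fun _ => (hX _).sub (hX _)
  rw [← h.map_sub_eq_map_partialSum hX (monotone_sortedTimes I) (le_sortedTimes I),
    Measure.map_map hv hsub]
  congr 1
  funext ω r
  simp only [Finset.restrict, incrementProcess, Function.comp_apply, sortedTimes_zero,
    sortedTimes_succ_symm]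

lemma map_incrementProcess_eq [IsFiniteMeasure ν] (hXBM : IsBMAfter μ X t)
    (hYBM : IsBMAfter ν Y t) (hX : ∀ r, Measurable (X r)) (hY : ∀ r, Measurable (Y r)) :
    μ.map (incrementProcess X t) = ν.map (incrementProcess Y t) := by
  refine IsProjectiveLimit.unique (P := fun I => (ν.map (incrementProcess Y t)).map I.restrict)
    (fun I => ?_) fun _ => rfl
  dsimp only
  rw [Measure.map_map (Finset.measurable_restrict I) (measurable_incrementProcess hX),
    Measure.map_map (Finset.measurable_restrict I) (measurable_incrementProcess hY)]
  exact (hXBM.map_restrict_incrementProcess hX I).trans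
    (hYBM.map_restrict_incrementProcess hY I).symm

lemma measure_preimage_eq [IsFiniteMeasure ν] (hXBM : IsBMAfter μ X t)
    (hYBM : IsBMAfter ν Y t) (hX : ∀ r, Measurable (X r)) (hY : ∀ r, Measurable (Y r))
    (Φ : Ω' → Ω) (hΦ : ∀ r, t ≤ r → ∀ ω, X r (Φ ω) - X t (Φ ω) = Y r ω - Y t ω)
    {A : Set Ω} (hA : MeasurableSet[incSigInf X t] A) : μ A = ν (Φ ⁻¹' A) := by
  rw [incSigInf_eq_comap_incrementProcess] at hA
  obtain ⟨S, hS, rfl⟩ := hA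
  have hΦ' : incrementProcess X t ∘ Φ = incrementProcess Y t :=
    funext fun ω => funext fun r => hΦ r r.2 ω
  rw [← Set.preimage_comp, hΦ', ← Measure.map_apply (measurable_incrementProcess hX) hS,
    ← Measure.map_apply (measurable_incrementProcess hY) hS,
    hXBM.map_incrementProcess_eq hYBM hX hY]

end IsBMAfter

lemma exists_incSig_preimage_ae_eq {Ω Ω' : Type*} [MeasurableSpace Ω'] {P : Measure Ω'} {d : ℕ}
    {t s : ℝ} {X : ℝ → Ω → Fin d → ℝ} {Y : ℝ → Ω' → Fin d → ℝ} (Φ : Ω' → Ω)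
    (hΦ : ∀ r, t ≤ r → ∀ ω, X r (Φ ω) - X t (Φ ω) = Y r ω - Y t ω) {M : Set Ω'}
    (hM : MeasurableSet[incAug P Y t s] M) :
    ∃ A, MeasurableSet[incSig X t s] A ∧ M =ᵐ[P] Φ ⁻¹' A := by
  obtain ⟨A, hA, hMA⟩ := exists_ae_eq_of_measurableSet_sup_nullSigma hM
  rw [← comap_incSig Y Φ hΦ s] at hA
  obtain ⟨A, hA', rfl⟩ := hA
  exact ⟨A, hA', hMA⟩

theorem stmt11_general {Ω : Type*} [MeasurableSpace Ω] (P : Measure Ω) [IsProbabilityMeasure P]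
    (d : ℕ) (t : ℝ) (ht : 0 ≤ t)
    (B : ℝ → Ω → Fin d → ℝ)
    (hBmeas : ∀ s : ℝ, Measurable (B s))
    (hBM : IsBMAfter P B t)
    (P₀ : Measure (PathSp d))
    (hP₀ : IsBMAfter P₀ (fun s ω => ω s) 0)
    (Φ : Ω → PathSp d)
    (hΦ : ∀ s : ℝ, t ≤ s → ∀ ω, Φ ω s - Φ ω t = B s ω - B t ω)
    (τ : Ω → ENNReal) (hτ : IsIncStoppingTime P B t τ) :
    ∃ τ' : PathSp d → ENNReal,
      IsIncStoppingTime P₀ (fun s ω => ω s) t τ' ∧ ∀ᵐ ω ∂P, τ ω = τ' (Φ ω) := by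
  have hW : ∀ r, Measurable fun x : PathSp d => x r := fun r => (continuous_eval_const r).measurable
  choose! A hA hτA using fun s (hs : t ≤ s) =>
    exists_incSig_preimage_ae_eq (X := fun r (x : PathSp d) => x r) Φ hΦ (hτ.2 s hs)
  have hτ' : ∀ᵐ ω ∂P, τ ω = ratHittingTime t A (Φ ω) := by
    have hτAq : ∀ᵐ ω ∂P, ∀ q : ℚ, t ≤ q → (Φ ω ∈ A q ↔ τ ω ≤ ENNReal.ofReal q) :=
      ae_all_iff.2 fun q => eventually_imp_distrib_left.2 fun hq =>
        (hτA q hq).mono fun ω hω => (Iff.of_eq hω).symm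
    filter_upwards [hτAq] with ω hω using (ratHittingTime_eq (hτ.1 ω) hω).symm
  refine ⟨ratHittingTime t A, ⟨ofReal_le_ratHittingTime, fun s hs => ?_⟩, hτ'⟩
  have hAs := incSig_le_incSigInf s _ (hA s hs)
  have hM : MeasurableSet[incSigInf (fun r (x : PathSp d) => x r) t]
      {x | ratHittingTime t A x ≤ ENNReal.ofReal s} :=
    measurable_ratHittingTime (fun q hq => incSig_le_incSigInf _ _ (hA q hq)) measurableSet_Iic
  refine measurableSet_sup_nullSigma_of_ae_eq (hA s hs) (hAs.symmDiff hM) ?_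
  rw [← measure_symmDiff_eq_zero_iff,
    (hP₀.mono ht).measure_preimage_eq hBM hW hBmeas Φ hΦ (hM.symmDiff hAs),
    Set.preimage_symmDiff, measure_symmDiff_eq_zero_iff]
  refine EventuallyEq.trans ?_ (hτA s hs)
  filter_upwards [hτ'] with ω hω
  exact congrArg (· ≤ ENNReal.ofReal s) hω.symm

/-- If `B^t` is a Brownian motion on `(Ω, F, P)` and `Φ : Ω → Ω₀` satisfies
`W^t_s(Φ(ω)) = B^t_s(ω)` for all `s ≥ t` (with `W` the canonical process on Wiener space
`(Ω₀, B(Ω₀), P₀)`), then every `[t,∞]`-valued `F^{B^t,P}`-stopping time `τ` on `Ω` is,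
`P`-a.s., of the form `τ̂ ∘ Φ` for some `[t,∞]`-valued `F^{W^t,P₀}`-stopping time `τ̂`. -/
theorem stmt11 {Ω : Type*} [MeasurableSpace Ω] (P : Measure Ω) [IsProbabilityMeasure P]
    (d : ℕ) (t : ℝ) (ht : 0 ≤ t)
    (B : ℝ → Ω → Fin d → ℝ)
    (hBmeas : ∀ s : ℝ, Measurable (B s))
    (hBcont : ∀ ω, Continuous fun s => B s ω)
    (hB0 : ∀ ω, B 0 ω = 0)
    (hBM : IsBMAfter P B t)
    (P₀ : Measure (PathSp d)) [IsProbabilityMeasure P₀]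
    (hP₀ : IsBMAfter P₀ (fun s ω => ω s) 0)
    (hP₀start : ∀ᵐ ω ∂P₀, ω 0 = 0)
    (Φ : Ω → PathSp d)
    (hΦ : ∀ s : ℝ, t ≤ s → ∀ ω, Φ ω s - Φ ω t = B s ω - B t ω)
    (τ : Ω → ENNReal) (hτ : IsIncStoppingTime P B t τ) :
    ∃ τ' : PathSp d → ENNReal,
      IsIncStoppingTime P₀ (fun s ω => ω s) t τ' ∧ ∀ᵐ ω ∂P, τ ω = τ' (Φ ω) :=
  stmt11_general P d t ht B hBmeas hBM P₀ hP₀ Φ hΦ τ hτ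

end
end

section
/- Let U be a Polish space homeomorphic via I to a Borel subset E of [0,1], let (Ω₀, B(Ω₀), P₀) be Wiener space with canonical process W, and let μ = {μ_s}_{s≥0} be a U-valued process, predictable with respect to the P₀-augmented Brownian filtration F^{W,P₀}, whose every path s ↦ μ_s(ω₀) is a Borel function [0,∞) → U. Then for every Borel set A in the space J = L⁰([0,∞); U) (with the Borel sigma-field induced by the weak topology of the embedding ι_J), the set {ω₀ ∈ Ω₀ : μ_·(ω₀) ∈ A} belongs to the P₀-completion F^{W,P₀}_∞. -/
open MeasureTheory ProbabilityTheory

noncomputable section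

/-- `P` is a Wiener measure: the canonical process is a `d`-dimensional Brownian motion
started at `0`. -/
structure IsWiener {d : ℕ} (P : Measure (PathSp d)) : Prop where
  prob : IsProbabilityMeasure P
  start : ∀ᵐ ω ∂P, ω 0 = 0
  indep : ∀ (n : ℕ) (t : Fin (n + 1) → ℝ), Monotone t → (∀ i, 0 ≤ t i) →
    iIndepFun
      (fun (i : Fin n) (ω : PathSp d) => ω (t i.succ) - ω (t i.castSucc)) P
  gauss : ∀ s r : ℝ, 0 ≤ s → s ≤ r →
    P.map (fun ω : PathSp d => ω r - ω s) =
      Measure.pi fun _ : Fin d => gaussianReal 0 (r - s).toNNReal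

/-- The raw filtration `F^W_s` of the canonical process. -/
def canSig (d : ℕ) (s : ℝ) : MeasurableSpace (PathSp d) :=
  ⨆ r ∈ Set.Icc (0 : ℝ) s, MeasurableSpace.comap (fun ω : PathSp d => ω r) inferInstance

/-- The sigma-field `F^W_∞`. -/
def canSigInf (d : ℕ) : MeasurableSpace (PathSp d) :=
  ⨆ r ∈ Set.Ici (0 : ℝ), MeasurableSpace.comap (fun ω : PathSp d => ω r) inferInstance

/-- `P`-null sets relative to `F^W_∞`, as a sigma-field. -/
def wienerNull (d : ℕ) (P : Measure (PathSp d)) : MeasurableSpace (PathSp d) :=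
  MeasurableSpace.generateFrom
    {N | ∃ A, MeasurableSet[canSigInf d] A ∧ P A = 0 ∧ N ⊆ A}

/-- The `P`-augmented Brownian filtration `F^{W,P}_s`. -/
def augSig (d : ℕ) (P : Measure (PathSp d)) (s : ℝ) : MeasurableSpace (PathSp d) :=
  canSig d s ⊔ wienerNull d P

/-- The predictable sigma-field on `[0,∞) × Ω` associated with a filtration `F`, generated
by the sets `{0} × A`, `A ∈ F 0`, and `(s,∞) × A`, `A ∈ F s`, `s ≥ 0`. -/
def predSigma {Ω : Type*} (F : ℝ → MeasurableSpace Ω) : MeasurableSpace (ℝ × Ω) :=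
  MeasurableSpace.generateFrom
    ({S | ∃ A : Set Ω, MeasurableSet[F 0] A ∧ S = ({0} : Set ℝ) ×ˢ A} ∪
     {S | ∃ s : ℝ, 0 ≤ s ∧ ∃ A : Set Ω, MeasurableSet[F s] A ∧ S = Set.Ioi s ×ˢ A})

/-- The functional `I_φ(u) = ∫₀^∞ φ(s,u(s)) ds = ∫₀^∞ φ⁺(s,u(s)) ds − ∫₀^∞ φ⁻(s,u(s)) ds`,
with values in `[−∞,∞]`. -/
def IfunE {U : Type*} (φ : ℝ × U → ℝ) (u : ℝ → U) : EReal :=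
  ((∫⁻ s in Set.Ioi (0 : ℝ), ENNReal.ofReal (φ (s, u s))) : EReal) -
  ((∫⁻ s in Set.Ioi (0 : ℝ), ENNReal.ofReal (-φ (s, u s))) : EReal)

/-- The Borel sigma-field of `J = L⁰([0,∞); U)`, generated by the functionals `I_φ`
over Borel `φ` (see Lemma M29_01 of the paper). -/
def JSigma (U : Type*) [MeasurableSpace U] : MeasurableSpace (ℝ → U) :=
  ⨆ (φ : ℝ × U → ℝ) (_ : Measurable φ), MeasurableSpace.comap (IfunE φ) inferInstance

/-! Every `F^{W,P₀}_s` lies in the completed `F^{W}_∞`, so a predictable process is jointly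
measurable for `B(ℝ) ⊗ F^{W,P₀}_∞`. By Tonelli, joint measurability makes each functional
`ω ↦ I_φ(μ_·(ω))` measurable, and these functionals generate the Borel sigma-field of `J`. -/

lemma canSig_le_canSigInf (d : ℕ) (s : ℝ) : canSig d s ≤ canSigInf d :=
  biSup_mono fun _ hr => hr.1

lemma augSig_le (d : ℕ) (P : Measure (PathSp d)) (s : ℝ) :
    augSig d P s ≤ canSigInf d ⊔ wienerNull d P :=
  sup_le_sup_right (canSig_le_canSigInf d s) _

lemma predSigma_le_prod {Ω : Type*} {F : ℝ → MeasurableSpace Ω} {m : MeasurableSpace Ω}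
    (hF : ∀ s, F s ≤ m) : predSigma F ≤ @Prod.instMeasurableSpace ℝ Ω _ m := by
  refine MeasurableSpace.generateFrom_le ?_
  rintro S (⟨A, hA, rfl⟩ | ⟨s, -, A, hA, rfl⟩)
  · exact (measurableSet_singleton 0).prod (hF 0 A hA)
  · exact measurableSet_Ioi.prod (hF s A hA)

section Paths

variable {Ω U : Type*} {mΩ : MeasurableSpace Ω} [MeasurableSpace U]

lemma measurable_JSigma_iff {f : Ω → ℝ → U} :
    Measurable[mΩ, JSigma U] f ↔ ∀ φ : ℝ × U → ℝ, Measurable φ → Measurable (IfunE φ ∘ f) := by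
  rw [measurable_iff_comap_le, JSigma, MeasurableSpace.comap_iSup, iSup_le_iff]
  refine forall_congr' fun φ => ?_
  rw [MeasurableSpace.comap_iSup, iSup_le_iff, MeasurableSpace.comap_comp,
    ← measurable_iff_comap_le]

lemma measurable_IfunE_path {μ : ℝ → Ω → U} (hμ : Measurable fun p : ℝ × Ω => μ p.1 p.2)
    {φ : ℝ × U → ℝ} (hφ : Measurable φ) :
    Measurable fun ω => IfunE φ (fun s => μ s ω) := by
  have hφμ : Measurable fun p : ℝ × Ω => φ (p.1, μ p.1 p.2) :=
    hφ.comp (measurable_fst.prodMk hμ)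
  unfold IfunE
  have hpos := hφμ.ennreal_ofReal.lintegral_prod_left' (μ := volume.restrict (Set.Ioi 0))
  have hneg := hφμ.neg.ennreal_ofReal.lintegral_prod_left' (μ := volume.restrict (Set.Ioi 0))
  fun_prop

lemma measurable_path_of_measurable_uncurry {μ : ℝ → Ω → U}
    (hμ : Measurable fun p : ℝ × Ω => μ p.1 p.2) :
    Measurable[mΩ, JSigma U] fun ω s => μ s ω :=
  measurable_JSigma_iff.2 fun _ hφ => measurable_IfunE_path hμ hφ

end Paths

theorem stmt14_general (d : ℕ) {U : Type*}
    [MeasurableSpace U]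
    (P₀ : Measure (PathSp d))
    (μ : ℝ → PathSp d → U)
    (hpred : Measurable[predSigma (augSig d P₀)] fun p : ℝ × PathSp d => μ p.1 p.2) :
    ∀ A : Set (ℝ → U), MeasurableSet[JSigma U] A →
      MeasurableSet[canSigInf d ⊔ wienerNull d P₀] {ω | (fun s => μ s ω) ∈ A} :=
  fun _ hA => measurable_path_of_measurable_uncurry
    (hpred.mono (predSigma_le_prod (augSig_le d P₀)) le_rfl) hA

/-- If `μ` is an `U`-valued process on Wiener space which is predictable with respect to
the `P₀`-augmented Brownian filtration and has Borel paths, then for every Borel set `A`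
of `J = L⁰([0,∞); U)` the set `{ω₀ : μ_·(ω₀) ∈ A}` belongs to `F^{W,P₀}_∞`. -/
theorem stmt14 (d : ℕ) {U : Type*} [TopologicalSpace U] [PolishSpace U]
    [MeasurableSpace U] [BorelSpace U]
    (P₀ : Measure (PathSp d)) (hP₀ : IsWiener P₀)
    (μ : ℝ → PathSp d → U)
    (hpred : Measurable[predSigma (augSig d P₀)] fun p : ℝ × PathSp d => μ p.1 p.2)
    (hpaths : ∀ ω, Measurable fun s => μ s ω) :
    ∀ A : Set (ℝ → U), MeasurableSet[JSigma U] A →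
      MeasurableSet[canSigInf d ⊔ wienerNull d P₀] {ω | (fun s => μ s ω) ∈ A} :=
  stmt14_general d P₀ μ hpred

end
end

section
/- Let U be a Polish space and J = L⁰([0,∞); U). The Borel sigma-field B(J) of the topology T♯(J) induced from the weak topology on P([0,∞) × U) via the embedding ι_J(u) = e^{−t}δ_{u(t)} dt equals the sigma-field generated by the family of functionals I_φ(u) := ∫₀^∞ φ(s, u(s)) ds, as φ ranges over all real-valued Borel-measurable functions on (0,∞) × U (with I_φ = ∫ φ⁺ − ∫ φ⁻, values in [−∞,∞]). -/
open MeasureTheory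

noncomputable section

/-- Representatives of `J = L⁰([0,∞); U)`: Borel-measurable functions. -/
def MJ (U : Type*) [MeasurableSpace U] : Type _ := {u : ℝ → U // Measurable u}

/-- The topology `T♯(J)` induced on `J` from the topology of weak convergence of measures
through the embedding `ι_J(u) = e^{−t} δ_{u(t)}(du) dt`: the initial topology of the maps
`u ↦ ∫ φ dι_J(u) = ∫₀^∞ e^{−s} φ(s,u(s)) ds`, over bounded continuous `φ`. -/
def weakTopJ (U : Type*) [TopologicalSpace U] [MeasurableSpace U] :
    TopologicalSpace (MJ U) :=
  ⨅ (φ : BoundedContinuousFunction (ℝ × U) ℝ),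
    TopologicalSpace.induced
      (fun u : MJ U => ∫ s in Set.Ioi (0 : ℝ), Real.exp (-s) * φ (s, u.1 s)) inferInstance

/-!
The embedding `ι_J` sends `u` to its occupation measure, the image of `e^{-s} ds` on `(0,∞)`
under `s ↦ (s, u s)`, and `T♯(J)` is the topology induced by `ι_J` from the weak topology.
Hence `B(J)` is the pullback of the Borel σ-algebra of `P(ℝ × U)`. On a second-countable space
whose closed sets are decreasing limits of bounded continuous functions, the portmanteau theorem
shows that the weak topology is already induced by countably many integrals `μ ↦ ∫ g dμ`, so the
Borel σ-algebra of `P(ℝ × U)` is the Giry σ-algebra, generated by the evaluations `μ ↦ μ A`.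
Finally `ι_J(u)(A) = I_φ(u)` for `φ = e^{-s} 1_A`, and conversely `I_φ(u)` is a difference of
the integrals of `e^{s} φ⁺` and `e^{s} φ⁻` against `ι_J(u)`.
-/

open Set Filter Topology TopologicalSpace
open scoped ENNReal NNReal BoundedContinuousFunction

theorem TopologicalSpace.exists_countable_isClosed_sInter_eq (X : Type*) [TopologicalSpace X]
    [SecondCountableTopology X] :
    ∃ 𝒞 : Set (Set X), 𝒞.Countable ∧ univ ∈ 𝒞 ∧ (∀ C ∈ 𝒞, IsClosed C) ∧
      (∀ C ∈ 𝒞, ∀ D ∈ 𝒞, C ∩ D ∈ 𝒞) ∧ ∀ F, IsClosed F → ⋂₀ {C ∈ 𝒞 | F ⊆ C} = F := by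
  obtain ⟨b, hb_count, -, hb⟩ := exists_countable_basis X
  refine ⟨sInter '' {t | t.Finite ∧ t ⊆ compl '' b}, ?_, ⟨∅, ⟨finite_empty, empty_subset _⟩,
    sInter_empty⟩, ?_, ?_, fun F hF => ?_⟩
  · exact (countable_ofPred_finite_subset (hb_count.image _)).image _
  · rintro _ ⟨t, ⟨-, ht⟩, rfl⟩
    refine isClosed_sInter fun C hC => ?_
    obtain ⟨W, hW, rfl⟩ := ht hC
    exact (hb.isOpen hW).isClosed_compl
  · rintro _ ⟨t, ⟨ht, htb⟩, rfl⟩ _ ⟨t', ⟨ht', htb'⟩, rfl⟩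
    exact ⟨t ∪ t', ⟨ht.union ht', union_subset htb htb'⟩, sInter_union t t'⟩
  · refine (subset_sInter fun C hC => hC.2).antisymm' fun x hx => ?_
    by_contra hxF
    obtain ⟨W, hWb, hxW, hWF⟩ := hb.exists_subset_of_mem_open hxF hF.isOpen_compl
    refine hx Wᶜ ⟨⟨{Wᶜ}, ⟨finite_singleton _, singleton_subset_iff.2 ⟨W, hWb, rfl⟩⟩,
      sInter_singleton _⟩, fun y hy hyW => hWF hyW hy⟩ hxW

namespace MeasureTheory

theorem measure_sInter_eq_iInf_of_directedOn {α : Type*} [MeasurableSpace α] {μ : Measure α}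
    {𝒟 : Set (Set α)} (h𝒟 : 𝒟.Countable) (hm : ∀ C ∈ 𝒟, NullMeasurableSet C μ)
    (hd : DirectedOn (· ⊇ ·) 𝒟) (hfin : ∃ C ∈ 𝒟, μ C ≠ ∞) :
    μ (⋂₀ 𝒟) = ⨅ C ∈ 𝒟, μ C := by
  have := h𝒟.to_subtype
  obtain ⟨C, hC, hCfin⟩ := hfin
  rw [sInter_eq_iInter, Directed.measure_iInter (s := fun C : 𝒟 => (C : Set α))
    (fun C => hm C C.2) hd.directed_val ⟨⟨C, hC⟩, hCfin⟩, iInf_subtype']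

section ApproxClosed

variable {X : Type*} [TopologicalSpace X] [HasOuterApproxClosed X] [MeasurableSpace X]
  [OpensMeasurableSpace X]

theorem limsup_measure_le_of_forall_tendsto_lintegral_apprSeq {ι : Type*} {L : Filter ι}
    {μ : Measure X} [IsFiniteMeasure μ] {μs : ι → Measure X} {F : Set X} (hF : IsClosed F)
    (h : ∀ n, Tendsto (fun i => ∫⁻ x, hF.apprSeq n x ∂μs i) L (𝓝 (∫⁻ x, hF.apprSeq n x ∂μ))) :
    limsup (fun i => μs i F) L ≤ μ F := by
  rcases L.eq_or_neBot with rfl | _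
  · simp
  refine ge_of_tendsto' (HasOuterApproxClosed.tendsto_lintegral_apprSeq hF μ) fun n => ?_
  calc limsup (fun i => μs i F) L
      ≤ limsup (fun i => ∫⁻ x, hF.apprSeq n x ∂μs i) L :=
        limsup_le_limsup (Eventually.of_forall fun i =>
          HasOuterApproxClosed.measure_le_lintegral hF (μs i) n)
    _ = ∫⁻ x, hF.apprSeq n x ∂μ := (h n).limsup_eq

theorem ProbabilityMeasure.exists_countable_isInducing_lintegral [SecondCountableTopology X] :
    ∃ 𝒢 : Set (X →ᵇ ℝ≥0), 𝒢.Countable ∧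
      IsInducing fun (μ : ProbabilityMeasure X) (g : 𝒢) => ∫⁻ x, g.1 x ∂μ := by
  obtain ⟨𝒞, h𝒞_count, h𝒞_univ, h𝒞_closed, h𝒞_inter, h𝒞_sInter⟩ :=
    exists_countable_isClosed_sInter_eq X
  have := h𝒞_count.to_subtype
  set 𝒢 := ⋃ C : 𝒞, range (h𝒞_closed C C.2).apprSeq
  have h𝒢 : 𝒢.Countable := countable_iUnion fun C => countable_range _
  have := h𝒢.to_subtype
  refine ⟨𝒢, h𝒢, isInducing_iff_nhds.2 fun μ => ?_⟩
  set T := fun (μ : ProbabilityMeasure X) (g : 𝒢) => ∫⁻ x, g.1 x ∂μ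
  have hT : Continuous T := _root_.continuous_pi fun g =>
    ProbabilityMeasure.continuous_lintegral_boundedContinuousFunction g.1
  refine le_antisymm hT.continuousAt.le_comap ?_
  have hlim : ∀ g ∈ 𝒢, Tendsto (fun ν : ProbabilityMeasure X => ∫⁻ x, g x ∂ν)
      (comap T (𝓝 (T μ))) (𝓝 (∫⁻ x, g x ∂μ)) := fun g hg =>
    ((continuous_apply (⟨g, hg⟩ : 𝒢)).tendsto (T μ)).comp (tendsto_comap (f := T))
  have hclosed : ∀ C ∈ 𝒞, limsup (fun ν : ProbabilityMeasure X => (ν : Measure X) C)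
      (comap T (𝓝 (T μ))) ≤ (μ : Measure X) C := fun C hC =>
    limsup_measure_le_of_forall_tendsto_lintegral_apprSeq (h𝒞_closed C hC) fun n =>
      hlim _ (mem_iUnion.2 ⟨⟨C, hC⟩, mem_range_self n⟩)
  -- Portmanteau: bound `limsup ν F` for closed `F`, a directed intersection of members of `𝒞`.
  refine tendsto_of_forall_isClosed_limsup_le' (μs := id) (L := comap T (𝓝 (T μ))) fun F hF => ?_
  have hdir : DirectedOn (· ⊇ ·) {C ∈ 𝒞 | F ⊆ C} := fun C hC D hD =>
    ⟨C ∩ D, ⟨h𝒞_inter C hC.1 D hD.1, subset_inter hC.2 hD.2⟩, inter_subset_left,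
      inter_subset_right⟩
  calc limsup (fun ν : ProbabilityMeasure X => (ν : Measure X) F) (comap T (𝓝 (T μ)))
      ≤ ⨅ C ∈ {C ∈ 𝒞 | F ⊆ C}, (μ : Measure X) C := le_iInf₂ fun C hC =>
        (limsup_le_limsup (Eventually.of_forall fun ν => measure_mono hC.2)).trans
          (hclosed C hC.1)
    _ = (μ : Measure X) F := by
        rw [← measure_sInter_eq_iInf_of_directedOn (h𝒞_count.mono (sep_subset _ _))
          (fun C hC => (h𝒞_closed C hC.1).measurableSet.nullMeasurableSet) hdir
          ⟨univ, ⟨h𝒞_univ, subset_univ F⟩, measure_ne_top _ _⟩, h𝒞_sInter F hF]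

end ApproxClosed

instance ProbabilityMeasure.borelSpace {X : Type*} [TopologicalSpace X] [HasOuterApproxClosed X]
    [SecondCountableTopology X] [MeasurableSpace X] [BorelSpace X] :
    BorelSpace (ProbabilityMeasure X) := by
  refine ⟨le_antisymm ?_ ?_⟩
  · have : OpensMeasurableSpace (ProbabilityMeasure X) (h := borel _) :=
      @OpensMeasurableSpace.mk _ _ (borel _) le_rfl
    have hcoe : Measurable[borel (ProbabilityMeasure X)]
        fun μ : ProbabilityMeasure X => (μ : Measure X) :=
      .measure_of_isPiSystem_of_isProbabilityMeasure BorelSpace.measurable_eq isPiSystem_isOpen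
        fun G hG => LowerSemicontinuous.measurable (lowerSemicontinuous_iff_le_liminf.2 fun μ =>
          ProbabilityMeasure.le_liminf_measure_open_of_tendsto tendsto_id hG)
    exact measurable_iff_comap_le.1 hcoe
  · obtain ⟨𝒢, h𝒢, hT⟩ := ProbabilityMeasure.exists_countable_isInducing_lintegral (X := X)
    have := h𝒢.to_subtype
    rw [hT.eq_induced, borel_comap, ← BorelSpace.measurable_eq]
    refine measurable_iff_comap_le.1 (measurable_pi_lambda _ fun g => ?_)
    exact (Measure.measurable_lintegral (by fun_prop)).comp measurable_subtype_coe

end MeasureTheory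

def expDecayMeasure : Measure ℝ :=
  (volume.restrict (Ioi 0)).withDensity fun s => ENNReal.ofReal (Real.exp (-s))

instance : IsProbabilityMeasure expDecayMeasure := by
  constructor
  rw [expDecayMeasure, withDensity_apply _ MeasurableSet.univ, Measure.restrict_univ,
    ← ofReal_integral_eq_lintegral_ofReal (integrableOn_exp_neg_Ioi 0)
      (Eventually.of_forall fun s => (Real.exp_nonneg _)), integral_exp_neg_Ioi_zero,
    ENNReal.ofReal_one]

theorem IfunE_of_nonneg {U : Type*} {φ : ℝ × U → ℝ} (hφ : 0 ≤ φ) (u : ℝ → U) :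
    IfunE φ u = ((∫⁻ s in Ioi 0, ENNReal.ofReal (φ (s, u s)) : ℝ≥0∞) : EReal) := by
  simp [IfunE, ENNReal.ofReal_of_nonpos (neg_nonpos.2 (hφ _))]

namespace MJ

variable {U : Type*} [MeasurableSpace U]

theorem measurable_graph (u : MJ U) : Measurable fun s => (s, u.1 s) :=
  measurable_id.prodMk u.2

def occupation (u : MJ U) : ProbabilityMeasure (ℝ × U) :=
  ⟨expDecayMeasure.map fun s => (s, u.1 s),
    Measure.isProbabilityMeasure_map u.measurable_graph.aemeasurable⟩

theorem lintegral_occupation (u : MJ U) {f : ℝ × U → ℝ≥0∞} (hf : Measurable f) :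
    ∫⁻ x, f x ∂u.occupation = ∫⁻ s in Ioi 0, ENNReal.ofReal (Real.exp (-s)) * f (s, u.1 s) := by
  rw [occupation, ProbabilityMeasure.coe_mk, lintegral_map hf u.measurable_graph, expDecayMeasure]
  exact lintegral_withDensity_eq_lintegral_mul _ (by fun_prop) (hf.comp u.measurable_graph)

theorem integral_occupation (u : MJ U) {φ : ℝ × U → ℝ} (hφ : Measurable φ) :
    ∫ x, φ x ∂u.occupation = ∫ s in Ioi 0, Real.exp (-s) * φ (s, u.1 s) := by
  rw [occupation, ProbabilityMeasure.coe_mk,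
    integral_map u.measurable_graph.aemeasurable hφ.aestronglyMeasurable, expDecayMeasure,
    integral_withDensity_eq_integral_toReal_smul (by fun_prop)
      (Eventually.of_forall fun _ => ENNReal.ofReal_lt_top)]
  simp only [ENNReal.toReal_ofReal (Real.exp_nonneg _), smul_eq_mul]

theorem setLIntegral_graph_eq_lintegral_occupation (u : MJ U) {h : ℝ × U → ℝ≥0∞}
    (hh : Measurable h) :
    ∫⁻ s in Ioi 0, h (s, u.1 s) =
      ∫⁻ x, ENNReal.ofReal (Real.exp x.1) * h x ∂u.occupation := by
  rw [lintegral_occupation u (by fun_prop)]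
  refine lintegral_congr fun s => ?_
  rw [← mul_assoc, ← ENNReal.ofReal_mul (Real.exp_nonneg _), ← Real.exp_add, neg_add_cancel,
    Real.exp_zero, ENNReal.ofReal_one, one_mul]

theorem occupation_apply_eq_IfunE (u : MJ U) {A : Set (ℝ × U)} (hA : MeasurableSet A) :
    (u.occupation : Measure (ℝ × U)) A =
      (IfunE (A.indicator fun x => Real.exp (-x.1)) u.1).toENNReal := by
  rw [IfunE_of_nonneg (indicator_nonneg fun x _ => (Real.exp_nonneg _)), EReal.toENNReal_coe,
    ← lintegral_indicator_one hA,
    lintegral_occupation u (f := A.indicator 1) (measurable_const.indicator hA)]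
  refine lintegral_congr fun s => ?_
  by_cases hs : (s, u.1 s) ∈ A <;> simp [hs]

theorem measurable_IfunE {φ : ℝ × U → ℝ} (hφ : Measurable φ) :
    Measurable[MeasurableSpace.comap occupation inferInstance] fun u : MJ U => IfunE φ u.1 := by
  have hlin : ∀ {h : ℝ × U → ℝ≥0∞}, Measurable h →
      Measurable[MeasurableSpace.comap occupation inferInstance]
        fun u : MJ U => ∫⁻ s in Ioi 0, h (s, u.1 s) := fun hh => by
    simp only [fun u => setLIntegral_graph_eq_lintegral_occupation u hh]
    exact (Measure.measurable_lintegral (by fun_prop)).comp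
      (measurable_subtype_coe.comp (comap_measurable _))
  exact (hlin (h := fun x => ENNReal.ofReal (φ x)) (by fun_prop)).coe_ereal_ennreal.sub
    (hlin (h := fun x => ENNReal.ofReal (-φ x)) (by fun_prop)).coe_ereal_ennreal

theorem comap_occupation_eq_iSup_comap_IfunE :
    MeasurableSpace.comap occupation inferInstance =
      ⨆ (φ : ℝ × U → ℝ) (_ : Measurable φ),
        MeasurableSpace.comap (fun u : MJ U => IfunE φ u.1) inferInstance := by
  set σI := ⨆ (φ : ℝ × U → ℝ) (_ : Measurable φ),
    MeasurableSpace.comap (fun u : MJ U => IfunE φ u.1) inferInstance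
  have hI : ∀ {φ : ℝ × U → ℝ}, Measurable φ → Measurable[σI] fun u : MJ U => IfunE φ u.1 :=
    fun hφ => measurable_iff_comap_le.2 (le_iSup₂ (f := fun (φ : ℝ × U → ℝ) (_ : Measurable φ) =>
      MeasurableSpace.comap (fun u : MJ U => IfunE φ u.1) inferInstance) _ hφ)
  have hocc : Measurable[σI] fun u : MJ U => (u.occupation : Measure (ℝ × U)) :=
    Measure.measurable_of_measurable_coe _ fun A hA => by
      simp only [occupation_apply_eq_IfunE _ hA]
      exact measurable_ereal_toENNReal.comp (hI (by fun_prop))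
  exact le_antisymm (measurable_iff_comap_le.1 hocc.subtype_mk)
    (iSup₂_le fun φ hφ => measurable_iff_comap_le.1 (measurable_IfunE hφ))

end MJ

theorem weakTopJ_eq_induced_occupation {U : Type*} [TopologicalSpace U] [MeasurableSpace U]
    [OpensMeasurableSpace U] :
    weakTopJ U = TopologicalSpace.induced MJ.occupation inferInstance := by
  refine le_antisymm (continuous_iff_le_induced.1 ?_) (le_iInf fun φ => ?_)
  · let _ := weakTopJ U
    refine ProbabilityMeasure.continuous_iff_forall_continuous_integral.2 fun φ => ?_
    simp only [MJ.integral_occupation _ φ.continuous.measurable]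
    exact continuous_iInf_dom continuous_induced_dom
  · let _ := TopologicalSpace.induced (MJ.occupation (U := U)) inferInstance
    refine continuous_iff_le_induced.1 ?_
    simp only [← MJ.integral_occupation _ φ.continuous.measurable]
    exact (ProbabilityMeasure.continuous_integral_boundedContinuousFunction φ).comp
      continuous_induced_dom

/-- The Borel sigma-field of `(J, T♯(J))` coincides with the sigma-field generated by the
functionals `I_φ`, `φ` ranging over all real-valued Borel functions on `(0,∞) × U`. -/
theorem stmt15 {U : Type*} [TopologicalSpace U] [PolishSpace U]
    [MeasurableSpace U] [BorelSpace U] :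
    @borel (MJ U) (weakTopJ U) =
      ⨆ (φ : ℝ × U → ℝ) (_ : Measurable φ),
        MeasurableSpace.comap (fun u : MJ U => IfunE φ u.1) inferInstance := by
  rw [weakTopJ_eq_induced_occupation, borel_comap, ← BorelSpace.measurable_eq,
    MJ.comap_occupation_eq_iSup_comap_IfunE]
end
end
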